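/- Let e be an empirical model with a combinatorial WPS representation e†. Then e is strongly contextual if and only if the collection of measure-zero events in V_M := {Ē(s_C) : s_C ∈ E(C), C ∈ M} covers the sample space Y. -/
import Mathlib


open MeasureTheory


/-- A section (event) over a finite set of measurements `U`: an assignment of an
outcome to each measurement in `U`. -/
abbrev Sec {X : Type*} (U : Finset X) (O : Type*) := {x : X // x ∈ U} → O

/-- Restriction of a section over `V` to a subset `U ⊆ V`. -/
def resSec {X O : Type*} {U V : Finset X} (h : U ⊆ V) (s : Sec V O) : Sec U O :=
  fun x => s ⟨x.1, h x.2⟩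

/-- The section over the singleton `{x}` induced by a section over `U ∋ x`. -/
def singleSec {X O : Type*} {U : Finset X} (x : X) (hx : x ∈ U) (s : Sec U O) :
    Sec ({x} : Finset X) O := fun _ => s ⟨x, hx⟩

/-- Restriction of a global section `s : X → O` to a context `C`. -/
def restrictGlobal {X O : Type*} (s : X → O) (C : Finset X) : Sec C O := fun x => s x.1

/-- Marginalization of the distribution `e C` to a subcontext `U ⊆ C`. -/
def margin {X O : Type*} [Fintype X] [DecidableEq X] [Fintype O] [DecidableEq O]
    (e : (C : Finset X) → Sec C O → ℝ) (C U : Finset X) (hU : U ⊆ C) (s : Sec U O) : ℝ :=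
  ∑ t ∈ Finset.univ.filter (fun t : Sec C O => resSec hU t = s), e C t

/-- An empirical model on the scenario `(X, M, O)`: `M` covers `X`, each `e C` for
`C ∈ M` is a probability distribution on sections over `C`, and the family satisfies
the compatibility (generalized no-signaling) condition. -/
def IsEmpiricalModel {X O : Type*} [Fintype X] [DecidableEq X] [Fintype O] [DecidableEq O]
    (M : Finset (Finset X)) (e : (C : Finset X) → Sec C O → ℝ) : Prop :=
  (∀ x : X, ∃ C ∈ M, x ∈ C) ∧
  (∀ C ∈ M, (∀ t : Sec C O, 0 ≤ e C t) ∧ ∑ t : Sec C O, e C t = 1) ∧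
  (∀ C ∈ M, ∀ C' ∈ M, ∀ t : Sec ((C ∩ C') : Finset X) O,
    margin e C (C ∩ C') Finset.inter_subset_left t
      = margin e C' (C ∩ C') Finset.inter_subset_right t)

/-- A global section consistent with the support of the model. -/
def ConsistentGlobal {X O : Type*} (M : Finset (Finset X))
    (e : (C : Finset X) → Sec C O → ℝ) (s : X → O) : Prop :=
  ∀ C ∈ M, e C (restrictGlobal s C) ≠ 0

/-- Strong contextuality: no global section is consistent with the support. -/
def StronglyContextual {X O : Type*} (M : Finset (Finset X))
    (e : (C : Finset X) → Sec C O → ℝ) : Prop :=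
  ¬ ∃ s : X → O, ConsistentGlobal M e s

/-- Logical contextuality: some section in the support of some `e C` does not extend
to a global section consistent with the support. -/
def LogicallyContextual {X O : Type*} (M : Finset (Finset X))
    (e : (C : Finset X) → Sec C O → ℝ) : Prop :=
  ∃ C ∈ M, ∃ t : Sec C O, e C t ≠ 0 ∧
    ¬ ∃ s : X → O, restrictGlobal s C = t ∧ ConsistentGlobal M e s

/-- Probabilistic contextuality: no global distribution marginalizes to every `e C`. -/
def ProbabilisticallyContextual {X O : Type*} [Fintype X] [DecidableEq X]
    [Fintype O] [DecidableEq O] (M : Finset (Finset X))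
    (e : (C : Finset X) → Sec C O → ℝ) : Prop :=
  ¬ ∃ d : (X → O) → ℝ, (∀ s, 0 ≤ d s) ∧ (∑ s, d s = 1) ∧
    ∀ C ∈ M, ∀ t : Sec C O,
      (∑ s ∈ Finset.univ.filter (fun s : X → O => restrictGlobal s C = t), d s) = e C t




/-- The σ-algebra on `Y` generated by the representations of singleton events over
measurements in a context `C` (for finitely many generators this coincides with the
generated algebra `Σ_C`). -/
def genCtx {X O Y : Type*} (Ebar : (U : Finset X) → Sec U O → Set Y)
    (C : Finset X) : MeasurableSpace Y :=
  MeasurableSpace.generateFrom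
    {S | ∃ x ∈ C, ∃ s : Sec ({x} : Finset X) O, S = Ebar {x} s}

/-- The set `Σ` of WPS events: the union of the algebras `Σ_C` over contexts `C ∈ M`. -/
def SigmaOf {X O Y : Type*} (M : Finset (Finset X))
    (Ebar : (U : Finset X) → Sec U O → Set Y) : Set (Set Y) :=
  {A | ∃ C ∈ M, MeasurableSet[genCtx Ebar C] A}

/-- A WPS representation `e† = (E†, Σ, μ)` of an empirical model `e`: an injective
event transfer map satisfying the gluing condition and nonemptiness, with a set
function `μ` satisfying Weak Classicality (WC), Empirical Consistency (EC) and
Mutual Exclusivity (ME). -/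
structure WPSRep {X O : Type*} [Fintype X] [DecidableEq X] [Fintype O] [DecidableEq O]
    (M : Finset (Finset X)) (e : (C : Finset X) → Sec C O → ℝ) (Y : Type*) where
  Ebar : (U : Finset X) → Sec U O → Set Y
  mu : Set Y → ℝ
  inj : ∀ U : Finset X, Function.Injective (Ebar U)
  glue : ∀ (U : Finset X) (s : Sec U O),
    Ebar U s = ⋂ (x : X), ⋂ (hx : x ∈ U), Ebar {x} (singleSec x hx s)
  nonempty : ∀ (U : Finset X) (s : Sec U O), (Ebar U s).Nonempty
  wc_univ : mu Set.univ = 1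
  wc_nonneg : ∀ C ∈ M, ∀ A : Set Y, MeasurableSet[genCtx Ebar C] A → 0 ≤ mu A
  wc_le_one : ∀ C ∈ M, ∀ A : Set Y, MeasurableSet[genCtx Ebar C] A → mu A ≤ 1
  wc_add : ∀ C ∈ M, ∀ A B : Set Y, MeasurableSet[genCtx Ebar C] A →
    MeasurableSet[genCtx Ebar C] B → Disjoint A B → mu (A ∪ B) = mu A + mu B
  ec : ∀ C ∈ M, ∀ (U : Finset X) (hU : U ⊆ C) (s : Sec U O),
    mu (Ebar U s) = margin e C U hU s
  me : ∀ (U : Finset X) (s s' : Sec U O), s ≠ s' → mu (Ebar U s ∩ Ebar U s') = 0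

/-- A combinatorial WPS representation: additionally satisfies Strong Mutual
Exclusivity and Exhaustiveness. -/
structure ComboWPSRep {X O : Type*} [Fintype X] [DecidableEq X] [Fintype O] [DecidableEq O]
    (M : Finset (Finset X)) (e : (C : Finset X) → Sec C O → ℝ) (Y : Type*)
    extends WPSRep M e Y where
  sme : ∀ (U : Finset X) (s s' : Sec U O), s ≠ s' → Ebar U s ∩ Ebar U s' = ∅
  exh : ∀ U : Finset X, (⋃ s : Sec U O, Ebar U s) = Set.univ

/-- The collection `V_M` of representations of events over maximal contexts. -/
def VMSet {X O Y : Type*} (M : Finset (Finset X))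
    (Ebar : (U : Finset X) → Sec U O → Set Y) : Set (Set Y) :=
  {A | ∃ C ∈ M, ∃ s : Sec C O, A = Ebar C s}

/-- A monotonic extension `(Y, Σ', μ')` of a WPS `(Y, Σ, μ)`: `Σ'` contains the
algebra generated by `Σ`, `μ'` restricts to `μ` on `Σ`, is monotone, and takes
values in `[0,1]`. -/
structure MonExt {Y : Type*} (Sigma : Set (Set Y)) (mu : Set Y → ℝ)
    (Sigma' : Set (Set Y)) (mu' : Set Y → ℝ) : Prop where
  sub : Sigma ⊆ Sigma'
  univ_mem : Set.univ ∈ Sigma'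
  compl_mem : ∀ A ∈ Sigma', Aᶜ ∈ Sigma'
  union_mem : ∀ A ∈ Sigma', ∀ B ∈ Sigma', A ∪ B ∈ Sigma'
  restricts : ∀ A ∈ Sigma, mu' A = mu A
  mono : ∀ A ∈ Sigma', ∀ B ∈ Sigma', A ⊆ B → mu' A ≤ mu' B
  nonneg : ∀ A ∈ Sigma', 0 ≤ mu' A
  le_one : ∀ A ∈ Sigma', mu' A ≤ 1


lemma resSec_refl {X O : Type*} {C : Finset X} (h : C ⊆ C) (t : Sec C O) :
    resSec h t = t := by
  funext x; simp [resSec]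

lemma margin_self {X O : Type*} [Fintype X] [DecidableEq X] [Fintype O] [DecidableEq O]
    (e : (C : Finset X) → Sec C O → ℝ) (C : Finset X) (h : C ⊆ C) (s : Sec C O) :
    margin e C C h s = e C s := by
  unfold margin
  simp only [resSec_refl, Finset.filter_eq', Finset.mem_univ, if_true, Finset.sum_singleton]

lemma combo_single_eq {X O Y : Type*} [Fintype X] [DecidableEq X] [Fintype O] [DecidableEq O]
    {M : Finset (Finset X)} {e : (C : Finset X) → Sec C O → ℝ}
    (W : ComboWPSRep M e Y) {U : Finset X} {a b : Sec U O} {y : Y}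
    (ha : y ∈ W.Ebar U a) (hb : y ∈ W.Ebar U b) : a = b := by
  by_contra h
  have hd := W.sme U a b h
  exact absurd (Set.mem_inter ha hb) (by simp [hd])

/-- **Proposition 1.1.** For any combinatorial WPS representation `e†` of an
empirical model `e`: `e` is strongly contextual if and only if the measure-zero
events in `V_M = {Ē(s_C) : s_C ∈ E(C), C ∈ M}` cover the sample space `Y`. -/
theorem strongly_contextual_iff_null_cover {X O Y : Type*}
    [Fintype X] [DecidableEq X] [Fintype O] [DecidableEq O]
    (M : Finset (Finset X)) (e : (C : Finset X) → Sec C O → ℝ)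
    (hmodel : IsEmpiricalModel M e)
    (W : ComboWPSRep M e Y) :
    StronglyContextual M e ↔
      ⋃₀ {A | A ∈ VMSet M W.Ebar ∧ W.mu A = 0} = Set.univ := by
  obtain ⟨hcov, hprob, hcomp⟩ := hmodel
  constructor
  · intro hSC
    ext y
    simp only [Set.mem_univ, iff_true, Set.mem_sUnion]
    have hex : ∀ C : Finset X, ∃ s : Sec C O, y ∈ W.Ebar C s := by
      intro C
      have h1 : y ∈ ⋃ s, W.Ebar C s := (W.exh C) ▸ Set.mem_univ y
      simpa using h1
    choose sc hsc using hex
    by_contra hno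
    push_neg at hno
    apply hSC
    choose Cx hCxM hCx using hcov
    refine ⟨fun x => sc (Cx x) ⟨x, hCx x⟩, ?_⟩
    intro C hC
    have hres : restrictGlobal (fun x => sc (Cx x) ⟨x, hCx x⟩) C = sc C := by
      funext x
      have h1 : y ∈ W.Ebar {x.1} (singleSec x.1 (hCx x.1) (sc (Cx x.1))) := by
        have h := hsc (Cx x.1)
        rw [W.glue] at h
        exact Set.mem_iInter.mp (Set.mem_iInter.mp h x.1) (hCx x.1)
      have h2 : y ∈ W.Ebar {x.1} (singleSec x.1 x.2 (sc C)) := by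
        have h := hsc C
        rw [W.glue] at h
        exact Set.mem_iInter.mp (Set.mem_iInter.mp h x.1) x.2
      have h3 := combo_single_eq W h1 h2
      have h4 := congrFun h3 ⟨x.1, Finset.mem_singleton_self x.1⟩
      simpa [singleSec, restrictGlobal] using h4
    rw [hres]
    intro h0
    have hmu : W.mu (W.Ebar C (sc C)) = 0 := by
      rw [W.ec C hC C (Finset.Subset.refl C), margin_self, h0]
    exact hno _ ⟨⟨C, hC, sc C, rfl⟩, hmu⟩ (hsc C)
  · rintro hcov' ⟨s, hs⟩
    obtain ⟨y, hy⟩ := W.nonempty Finset.univ (fun x => s x.1)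
    have hyC : ∀ C ∈ M, y ∈ W.Ebar C (restrictGlobal s C) := by
      intro C hC
      rw [W.glue]
      refine Set.mem_iInter.mpr fun x => Set.mem_iInter.mpr fun hx => ?_
      have h1 : y ∈ W.Ebar {x} (singleSec x (Finset.mem_univ x)
          (fun x : {a // a ∈ (Finset.univ : Finset X)} => s x.1)) := by
        rw [W.glue] at hy
        exact Set.mem_iInter.mp (Set.mem_iInter.mp hy x) (Finset.mem_univ x)
      have heq : singleSec x hx (restrictGlobal s C) = singleSec x (Finset.mem_univ x)
          (fun x : {a // a ∈ (Finset.univ : Finset X)} => s x.1) := by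
        funext z; rfl
      rw [heq]; exact h1
    have hy2 : y ∈ (Set.univ : Set Y) := Set.mem_univ y
    rw [← hcov'] at hy2
    obtain ⟨A, ⟨⟨C, hC, t, rfl⟩, hmu⟩, hyA⟩ := hy2
    have ht : t = restrictGlobal s C := combo_single_eq W hyA (hyC C hC)
    have hmu2 : W.mu (W.Ebar C t) = e C t := by
      rw [W.ec C hC C (Finset.Subset.refl C), margin_self]
    rw [ht] at hmu2 hmu
    exact hs C hC (hmu2 ▸ hmu)
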